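/- arXiv:1804.00916 — 2 statements merged into one kernel-verified Lean document; each statement's English description precedes it below -/
import Mathlib

section
/- Let k be a nontrivial commutative ring, let V = k^n be the free k-module with basis v_1, ..., v_n, and let W_{n-1} = {w ∈ W_n : w(n) = n} act on V^{⊗r} by restriction of the diagonal basis-permuting action of W_n. If r + 1 ≥ n, then the induced algebra homomorphism Φ_{n,r+1/2} from the group algebra k[W_{n-1}] to End_k(V^{⊗r}) is injective (the representation is faithful). -/
noncomputable section

open Equiv

/-- The linear action of a group `G` on the free `k`-module `X → k` of functions,
induced from a `G`-action on `X` by `(g • f) x = f (g⁻¹ • x)`. -/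
def actEnd (k : Type) [CommRing k] (G : Type) [Group G] (X : Type) [MulAction G X] :
    G →* Module.End k (X → k) where
  toFun g := LinearMap.funLeft k k fun x => g⁻¹ • x
  map_one' := by
    ext f x
    simp
  map_mul' g₁ g₂ := by
    ext f x
    simp [mul_smul]

/-- The diagonal (value-permutation) action of the symmetric group `W_n` on
`V^{⊗r}` (`V = k^n`), modelled as the free `k`-module on multi-indices `Fin r → Fin n`;
on basis vectors, `w ⬝ (v_{i_1} ⊗ ⋯ ⊗ v_{i_r}) = v_{w i_1} ⊗ ⋯ ⊗ v_{w i_r}`. -/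
def permEnd (k : Type) [CommRing k] (n r : ℕ) :
    Equiv.Perm (Fin n) →* Module.End k ((Fin r → Fin n) → k) :=
  actEnd k (Equiv.Perm (Fin n)) (Fin r → Fin n)

/-- `Φ_{n,r} : k[W_n] → End_k(V^{⊗r})`. -/
def PhiAlg (k : Type) [CommRing k] (n r : ℕ) :
    MonoidAlgebra k (Equiv.Perm (Fin n)) →ₐ[k] Module.End k ((Fin r → Fin n) → k) :=
  MonoidAlgebra.lift k (Module.End k ((Fin r → Fin n) → k)) (Equiv.Perm (Fin n)) (permEnd k n r)

/-- The restriction of `Φ_{n,r}` to the group algebra of a subgroup `G ≤ W_n`. -/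
def PhiSub (k : Type) [CommRing k] (n r : ℕ) (G : Subgroup (Equiv.Perm (Fin n))) :
    MonoidAlgebra k ↥G →ₐ[k] Module.End k ((Fin r → Fin n) → k) :=
  MonoidAlgebra.lift k (Module.End k ((Fin r → Fin n) → k)) ↥G ((permEnd k n r).comp G.subtype)

/-- `W_{n-1} = {w ∈ W_n : w(n) = n}`, the stabilizer of the last basis vector. -/
def stabLast (n : ℕ) (hn : 0 < n) : Subgroup (Equiv.Perm (Fin n)) :=
  MulAction.stabilizer (Equiv.Perm (Fin n)) (⟨n - 1, Nat.sub_lt hn Nat.one_pos⟩ : Fin n)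

/-- `V(Λ)`: the span of the basis tensors whose multi-index has value-type `Λ`
(the value-type of a multi-index `i` is the set-partition `Setoid.ker i` by fibers). -/
def Vpart (k : Type) [CommRing k] (n r : ℕ) (Λ : Setoid (Fin r)) :
    Submodule k ((Fin r → Fin n) → k) :=
  Submodule.span k {f | ∃ i : Fin r → Fin n, Setoid.ker i = Λ ∧ f = Pi.single i 1}

/-- `V'(Λ')`: the span of the basis tensors `v_{i_1} ⊗ ⋯ ⊗ v_{i_r} ⊗ v_n`
whose multi-index `(i_1, …, i_r, n)` has value-type `Λ'`. -/
def Vpart' (k : Type) [CommRing k] (n r : ℕ) (hn : 0 < n) (Λ' : Setoid (Fin (r + 1))) :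
    Submodule k ((Fin (r + 1) → Fin n) → k) :=
  Submodule.span k {f | ∃ i : Fin (r + 1) → Fin n, Setoid.ker i = Λ' ∧
    i (Fin.last r) = (⟨n - 1, Nat.sub_lt hn Nat.one_pos⟩ : Fin n) ∧ f = Pi.single i 1}

/-- The submodule `V^{⊗r} ⊗ v_n ⊆ V^{⊗(r+1)}`. -/
def lastSub (k : Type) [CommRing k] (n r : ℕ) (hn : 0 < n) :
    Submodule k ((Fin (r + 1) → Fin n) → k) :=
  Submodule.span k {f | ∃ i : Fin (r + 1) → Fin n,
    i (Fin.last r) = (⟨n - 1, Nat.sub_lt hn Nat.one_pos⟩ : Fin n) ∧ f = Pi.single i 1}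

/-- The multi-index of the tensor `v_{n-l+1} ⊗ ⋯ ⊗ v_n`. -/
def baseIdx (n l : ℕ) (h : l ≤ n) : Fin l → Fin n :=
  fun α => ⟨n - l + α.1, by have := α.isLt; omega⟩

/-- `H_n(l)`: the `k[W_n]`-submodule of `V^{⊗l}` generated by `v_{n-l+1} ⊗ ⋯ ⊗ v_n`. -/
def Hmod (k : Type) [CommRing k] (n l : ℕ) (h : l ≤ n) :
    Submodule k ((Fin l → Fin n) → k) :=
  Submodule.span k
    (Set.range fun w : Equiv.Perm (Fin n) => permEnd k n l w (Pi.single (baseIdx n l h) 1))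

/-- The multi-index of the tensor `v_{n-m} ⊗ ⋯ ⊗ v_{n-1}` (inside `U = ⟨v_1, …, v_{n-1}⟩`). -/
def baseIdx' (n m : ℕ) (h : m < n) : Fin m → Fin n :=
  fun α => ⟨n - 1 - m + α.1, by have := α.isLt; omega⟩

/-- `H_{n-1}(m)`: the `k[W_{n-1}]`-submodule of `U^{⊗m}` generated by
`v_{n-m} ⊗ ⋯ ⊗ v_{n-1}`, where `U = ⟨v_1, …, v_{n-1}⟩`. -/
def Hprime (k : Type) [CommRing k] (n m : ℕ) (h : m < n) :
    Submodule k ((Fin m → Fin n) → k) :=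
  Submodule.span k
    (Set.range fun w : ↥(stabLast n (by omega)) =>
      permEnd k n m ↑w (Pi.single (baseIdx' n m h) 1))

/-- The Young subgroup `W_{(n-l,1^l)}` of permutations fixing each of the last `l` points. -/
def fixTop (n l : ℕ) : Subgroup (Equiv.Perm (Fin n)) where
  carrier := {w | ∀ j : Fin n, n - l ≤ (j : ℕ) → w j = j}
  one_mem' := by intro j _; rfl
  mul_mem' := by
    intro a b ha hb j hj
    simp only [Set.mem_setOf_eq] at ha hb
    rw [Equiv.Perm.mul_apply, hb j hj, ha j hj]
  inv_mem' := by
    intro a ha j hj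
    simp only [Set.mem_setOf_eq] at ha
    conv_lhs => rw [← ha j hj]
    exact (show a⁻¹ (a j) = j from a.symm_apply_apply j)

/-- The index of the consecutive block (with block sizes `lam`) containing position `x`. -/
def blockIdx (lam : List ℕ) (x : ℕ) : ℕ :=
  ((List.range lam.length).filter fun t => (lam.take (t + 1)).sum ≤ x).length

/-- The Young subgroup `W_λ ≤ W_d`: permutations preserving each consecutive block
of sizes `λ_1, λ_2, …`. -/
def youngSubgroup (d : ℕ) (lam : List ℕ) : Subgroup (Equiv.Perm (Fin d)) where
  carrier := {w | ∀ j : Fin d, blockIdx lam ((w j : Fin d) : ℕ) = blockIdx lam (j : ℕ)}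
  one_mem' := by intro j; rfl
  mul_mem' := by
    intro a b ha hb j
    simp only [Set.mem_setOf_eq] at ha hb
    rw [Equiv.Perm.mul_apply, ha (b j), hb j]
  inv_mem' := by
    intro a ha j
    simp only [Set.mem_setOf_eq] at ha
    conv_rhs => rw [← (show a (a⁻¹ j) = j from a.apply_symm_apply j)]
    rw [ha (a⁻¹ j)]

/-- `x_λ = Σ_{w ∈ W_λ} w ∈ k[W_d]`. -/
def xElt (k : Type) [CommRing k] (d : ℕ) (lam : List ℕ) :
    MonoidAlgebra k (Equiv.Perm (Fin d)) :=
  letI := Classical.decPred (· ∈ youngSubgroup d lam)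
  ∑ w ∈ Finset.univ.filter (· ∈ youngSubgroup d lam), MonoidAlgebra.single w (1 : k)

/-- `y_λ = Σ_{w ∈ W_λ} sgn(w) w ∈ k[W_d]`. -/
def yElt (k : Type) [CommRing k] (d : ℕ) (lam : List ℕ) :
    MonoidAlgebra k (Equiv.Perm (Fin d)) :=
  letI := Classical.decPred (· ∈ youngSubgroup d lam)
  ∑ w ∈ Finset.univ.filter (· ∈ youngSubgroup d lam),
    MonoidAlgebra.single w ((Equiv.Perm.sign w : ℤ) : k)

/-- `y_λ = Σ_{w ∈ W_λ ∩ G} sgn(w) w`, as an element of the group algebra of a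
subgroup `G ≤ W_d` (for `G = W_{n-1}` and `λ ⊢ n-1` this is the usual `y_λ ∈ k[W_{n-1}]`). -/
def yEltSub (k : Type) [CommRing k] {d : ℕ} (G : Subgroup (Equiv.Perm (Fin d)))
    (lam : List ℕ) : MonoidAlgebra k ↥G :=
  letI : Fintype ↥G := Fintype.ofFinite ↥G
  letI := Classical.decPred fun w : ↥G => (w : Equiv.Perm (Fin d)) ∈ youngSubgroup d lam
  ∑ w ∈ Finset.univ.filter (fun w : ↥G => (w : Equiv.Perm (Fin d)) ∈ youngSubgroup d lam),
    MonoidAlgebra.single w ((Equiv.Perm.sign (w : Equiv.Perm (Fin d)) : ℤ) : k)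

/-- The dominance order on partitions (as lists of parts): `lam ⊵ mu`. -/
def Dominates (lam mu : List ℕ) : Prop :=
  ∀ t : ℕ, (mu.take t).sum ≤ (lam.take t).sum

/-- The conjugate (transpose) partition: `μᵀ_i = #{j : μ_j ≥ i}`. -/
def conjList (mu : List ℕ) : List ℕ :=
  (List.range mu.headI).map fun i => (mu.filter fun p => i < p).length

/-- `lam` is a partition of `d`: positive parts, in weakly decreasing order, summing to `d`. -/
def IsPartitionList (d : ℕ) (lam : List ℕ) : Prop :=
  (∀ p ∈ lam, 0 < p) ∧ lam.sum = d ∧ lam.Pairwise (· ≥ ·)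

/-- The hook partition `α(d,r) = (d-r, 1^r)`. -/
def hookPartition (d r : ℕ) : List ℕ := (d - r) :: List.replicate r 1

/-- The representation of `k[W_d]` on the permutation module `M^λ`, the free `k`-module
on the left cosets `W_d / W_λ` with `W_d` acting by left translation. -/
def PhiQuot (k : Type) [CommRing k] (d : ℕ) (lam : List ℕ) :
    MonoidAlgebra k (Equiv.Perm (Fin d)) →ₐ[k]
      Module.End k ((Equiv.Perm (Fin d) ⧸ youngSubgroup d lam) → k) :=
  MonoidAlgebra.lift k _ _
    (actEnd k (Equiv.Perm (Fin d)) (Equiv.Perm (Fin d) ⧸ youngSubgroup d lam))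

/-- The representation of `k[G]` (for `G ≤ W_d`) on the permutation module on the
left cosets `G / (G ∩ W_λ)`. -/
def PhiQuotSub (k : Type) [CommRing k] {d : ℕ} (G : Subgroup (Equiv.Perm (Fin d)))
    (lam : List ℕ) :
    MonoidAlgebra k ↥G →ₐ[k]
      Module.End k ((↥G ⧸ Subgroup.comap G.subtype (youngSubgroup d lam)) → k) :=
  MonoidAlgebra.lift k _ _
    (actEnd k ↥G (↥G ⧸ Subgroup.comap G.subtype (youngSubgroup d lam)))

/-- The Stirling number of the second kind `S(r,l)`: the number of set-partitions
of an `r`-element set into exactly `l` nonempty blocks. -/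
def stirling (r l : ℕ) : ℕ :=
  Nat.card {Λ : Setoid (Fin r) // Nat.card (Quotient Λ) = l}

/-!
When the stabilizer of a point `x` is trivial, the coefficient of the basis vector `e_{w • x}`
in `a · e_x` is exactly the coefficient of `w` in `a`, so the permutation representation of the
group algebra is faithful. A multi-index `j ∈ [n]^r` taking every value other than `n` exists as
soon as `r ≥ n - 1`, and it is such a point for `W_{n-1}`: an element of `W_{n-1}` fixing `j`
fixes every value of `j` as well as `n`.
-/

section PermutationRepresentation

variable {k : Type} [CommRing k] {G : Type} [Group G] {X : Type} [MulAction G X]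

theorem actEnd_apply_single [DecidableEq X] (g : G) (x : X) :
    actEnd k G X g (Pi.single x 1) = Pi.single (g • x) 1 := by
  ext y
  simp only [actEnd, MonoidHom.coe_mk, OneHom.coe_mk, LinearMap.funLeft_apply, Pi.single_apply,
    inv_smul_eq_iff]

theorem lift_actEnd_apply_single_smul [DecidableEq X] {x : X}
    (hx : MulAction.stabilizer G x = ⊥) (a : MonoidAlgebra k G) (w : G) :
    MonoidAlgebra.lift k _ G (actEnd k G X) a (Pi.single x 1) (w • x) = a.coeff w := by
  classical
  have hfree (g : G) : w • x = g • x ↔ w = g := by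
    rw [← inv_smul_eq_iff, smul_smul, ← MulAction.mem_stabilizer_iff, hx, Subgroup.mem_bot,
      inv_mul_eq_one, eq_comm]
  rw [MonoidAlgebra.lift_apply, Finsupp.sum, LinearMap.coe_sum, Finset.sum_apply,
    Finset.sum_apply]
  simp only [LinearMap.smul_apply, actEnd_apply_single, Pi.smul_apply, Pi.single_apply, hfree,
    smul_eq_mul, mul_ite, mul_one, mul_zero]
  rw [Finset.sum_ite_eq, ite_eq_left_iff, eq_comm]
  exact Finsupp.notMem_support_iff.mp

theorem lift_actEnd_injective_of_stabilizer_eq_bot {x : X}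
    (hx : MulAction.stabilizer G x = ⊥) :
    Function.Injective (MonoidAlgebra.lift k _ G (actEnd k G X)) := by
  classical
  rw [injective_iff_map_eq_zero]
  intro a ha
  ext w
  simpa [ha] using (lift_actEnd_apply_single_smul hx a w).symm

end PermutationRepresentation

theorem PhiSub_eq_lift_actEnd (k : Type) [CommRing k] (n r : ℕ)
    (G : Subgroup (Equiv.Perm (Fin n))) :
    PhiSub k n r G = MonoidAlgebra.lift k _ G (actEnd k G (Fin r → Fin n)) := rfl

theorem exists_index_range_covers_ne_last {n : ℕ} (r : ℕ) (hn : 0 < n) (hr : n ≤ r + 1) :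
    ∃ j : Fin r → Fin n, ∀ x : Fin n, (x : ℕ) ≠ n - 1 → x ∈ Set.range j :=
  ⟨fun α => ⟨min α (n - 1), by omega⟩,
    fun x hx => ⟨⟨x, by omega⟩, Fin.ext (by simp only [inf_eq_left]; omega)⟩⟩

theorem stabilizer_stabLast_eq_bot {n r : ℕ} (hn : 0 < n) {j : Fin r → Fin n}
    (hj : ∀ x : Fin n, (x : ℕ) ≠ n - 1 → x ∈ Set.range j) :
    MulAction.stabilizer (stabLast n hn) j = ⊥ := by
  rw [eq_bot_iff]
  intro g hg
  have hlast : (g : Equiv.Perm (Fin n)) ⟨n - 1, by omega⟩ = ⟨n - 1, by omega⟩ := g.2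
  have hrange (α : Fin r) : (g : Equiv.Perm (Fin n)) (j α) = j α := congrFun hg α
  rw [Subgroup.mem_bot, Subtype.ext_iff, Subgroup.coe_one]
  ext x
  by_cases hx : (x : ℕ) = n - 1
  · rw [show x = ⟨n - 1, by omega⟩ from Fin.ext hx, hlast]; rfl
  · obtain ⟨α, rfl⟩ := hj x hx
    rw [hrange]; rfl

theorem stmt_1_general (k : Type) [CommRing k] (n r : ℕ) (hn : 0 < n)
    (hr : n ≤ r + 1) : Function.Injective ⇑(PhiSub k n r (stabLast n hn)) := by
  obtain ⟨j, hj⟩ := exists_index_range_covers_ne_last r hn hr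
  rw [PhiSub_eq_lift_actEnd]
  exact lift_actEnd_injective_of_stabilizer_eq_bot (stabilizer_stabLast_eq_bot hn hj)

/-- If `r + 1 ≥ n`, the representation `Φ_{n,r+1/2} : k[W_{n-1}] → End_k(V^{⊗r})`
(restriction of the diagonal `W_n`-action to `W_{n-1} = {w : w(n) = n}`) is faithful. -/
theorem stmt_1 (k : Type) [CommRing k] [Nontrivial k] (n r : ℕ) (hn : 0 < n)
    (hr : n ≤ r + 1) : Function.Injective ⇑(PhiSub k n r (stabLast n hn)) :=
  stmt_1_general k n r hn hr
end
end

section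
/- Let k be a commutative ring and let Λ be a set-partition of {1,...,r} with l = ℓ(Λ) parts, where 1 ≤ l ≤ n. Then V(Λ) is isomorphic to H_n(l) as a k[W_n]-module; explicitly, the k-linear map sending each basis tensor v_{i_1} ⊗ ... ⊗ v_{i_l} of H_n(l) (with distinct factors) to the basis tensor of V(Λ) obtained by placing v_{i_j} in every tensor position belonging to the j-th block of Λ is a W_n-equivariant k-linear isomorphism onto V(Λ). -/
noncomputable section

open Equiv

/-! Let `q : Fin r → Fin l` send a position to the index of its block. A multi-index `j` has
value-type `Λ = ker q` exactly when `j = i ∘ q` with `i` injective, so precomposition with `q`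
maps the injective multi-indices (a single `W_n`-orbit, spanning `H_n(l)`) bijectively onto
those of value-type `Λ`. Extension by zero along this injective, `W_n`-equivariant map of index
sets is an injective equivariant linear map carrying the basis of `H_n(l)` onto that of `V(Λ)`. -/

open Function

theorem Setoid.ker_eq_ker_iff_exists_injective_comp {α β γ : Type*} {q : α → β}
    (hq : Surjective q) {j : α → γ} :
    Setoid.ker j = Setoid.ker q ↔ ∃ i : β → γ, Injective i ∧ i ∘ q = j := by
  constructor
  · intro h
    refine ⟨j ∘ surjInv hq, fun m m' hm => ?_, funext fun a => ?_⟩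
    · have : Setoid.ker j (surjInv hq m) (surjInv hq m') := hm
      rwa [h, Setoid.ker_def, surjInv_eq hq, surjInv_eq hq] at this
    · have : Setoid.ker q (surjInv hq (q a)) a := by rw [Setoid.ker_def, surjInv_eq hq]
      rwa [← h] at this
  · rintro ⟨i, hi, rfl⟩
    ext a b
    simp only [Setoid.ker_def, comp_apply, hi.eq_iff]

theorem Set.image_comp_right_setOf_injective {α β γ : Type*} {q : α → β} (hq : Surjective q) :
    (· ∘ q) '' {i : β → γ | Injective i} = {j | Setoid.ker j = Setoid.ker q} := by
  ext j
  simp [Setoid.ker_eq_ker_iff_exists_injective_comp hq]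

theorem Equiv.Perm.orbit_eq_setOf_injective {β X : Type*} [Finite β] {i₀ : β → X}
    (h₀ : Injective i₀) : MulAction.orbit (Perm X) i₀ = {i | Injective i} := by
  ext i
  constructor
  · rintro ⟨w, rfl⟩
    exact w.injective.comp h₀
  · intro hi
    obtain ⟨w, hw⟩ := Perm.exists_extending_pair i₀ i h₀ hi
    exact ⟨w, funext hw⟩

theorem Function.ExtendByZero.linearMap_single {R ι η : Type*} [Semiring R] [DecidableEq ι]
    [DecidableEq η] {s : ι → η} (hs : Injective s) (i : ι) (c : R) :
    ExtendByZero.linearMap R s (Pi.single i c) = Pi.single (s i) c := by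
  funext y
  by_cases hy : ∃ x, s x = y
  · obtain ⟨x, rfl⟩ := hy
    simp [hs.extend_apply, Pi.single_apply, hs.eq_iff]
  · rw [ExtendByZero.linearMap_apply, extend_apply' _ _ _ hy, Pi.single_apply, if_neg]
    · rfl
    · rintro rfl
      exact hy ⟨i, rfl⟩

def MulActionHom.funLeft (M : Type*) {X α β : Type*} [SMul M X] (q : α → β) :
    (β → X) →[M] (α → X) where
  toFun i := i ∘ q
  map_smul' _ _ := rfl

section actEnd

variable (k : Type) [CommRing k] {G X Y : Type} [Group G] [MulAction G X] [MulAction G Y]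

theorem actEnd_apply (g : G) (f : X → k) (x : X) : actEnd k G X g f x = f (g⁻¹ • x) := rfl

theorem actEnd_single [DecidableEq X] (g : G) (x : X) (c : k) :
    actEnd k G X g (Pi.single x c) = Pi.single (g • x) c := by
  funext y
  simp only [actEnd_apply, Pi.single_apply, inv_smul_eq_iff]

theorem actEnd_extendByZero (s : X →[G] Y) (hs : Injective s) (g : G) (f : X → k) :
    actEnd k G Y g (ExtendByZero.linearMap k s f) =
      ExtendByZero.linearMap k s (actEnd k G X g f) := by
  funext y
  simp only [actEnd_apply, ExtendByZero.linearMap_apply]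
  by_cases hy : ∃ x, s x = y
  · obtain ⟨x, rfl⟩ := hy
    rw [← map_smul, hs.extend_apply, hs.extend_apply, actEnd_apply]
  · have hy' : ¬∃ x, s x = g⁻¹ • y := by
      rintro ⟨x, hx⟩
      exact hy ⟨g • x, by rw [map_smul, hx, smul_inv_smul]⟩
    rw [extend_apply' _ _ _ hy, extend_apply' _ _ _ hy', Pi.zero_apply, Pi.zero_apply]

end actEnd

theorem baseIdx_injective (n l : ℕ) (h : l ≤ n) : Injective (baseIdx n l h) := by
  intro a b hab
  have := congrArg Fin.val hab
  simp only [baseIdx] at this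
  exact Fin.ext (by omega)

theorem Hmod_eq_span (k : Type) [CommRing k] (n l : ℕ) (h : l ≤ n) :
    Hmod k n l h = Submodule.span k ((fun i => Pi.single i 1) '' {i | Injective i}) := by
  rw [← Equiv.Perm.orbit_eq_setOf_injective (baseIdx_injective n l h), MulAction.orbit,
    ← Set.range_comp]
  simp only [Hmod, permEnd, actEnd_single]
  rfl

theorem Vpart_eq_span (k : Type) [CommRing k] (n r : ℕ) (Λ : Setoid (Fin r)) :
    Vpart k n r Λ = Submodule.span k ((fun j => Pi.single j 1) '' {j | Setoid.ker j = Λ}) := by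
  simp only [Vpart, Set.image, Set.mem_setOf_eq, eq_comm]

theorem stmt_7_general (k : Type) [CommRing k] (n r l : ℕ) (hn : l ≤ n)
    (Λ : Setoid (Fin r)) (β : Quotient Λ ≃ Fin l) :
    ∃ e : ↥(Hmod k n l hn) ≃ₗ[k] ↥(Vpart k n r Λ),
      (∀ (i : Fin l → Fin n), Function.Injective i →
        ∀ (h1 : Pi.single i (1 : k) ∈ Hmod k n l hn)
          (h2 : Pi.single (fun α : Fin r => i (β (Quotient.mk Λ α))) (1 : k) ∈ Vpart k n r Λ),
          e ⟨Pi.single i 1, h1⟩ = ⟨Pi.single (fun α : Fin r => i (β (Quotient.mk Λ α))) 1, h2⟩) ∧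
      ∀ (w : Equiv.Perm (Fin n)) (x : ↥(Hmod k n l hn))
        (hx : permEnd k n l w ↑x ∈ Hmod k n l hn)
        (hy : permEnd k n r w ↑(e x) ∈ Vpart k n r Λ),
        e ⟨permEnd k n l w ↑x, hx⟩ = ⟨permEnd k n r w ↑(e x), hy⟩ := by
  let q : Fin r → Fin l := β ∘ Quotient.mk Λ
  have hq : Surjective q := β.surjective.comp Quotient.mk_surjective
  have hker : Setoid.ker q = Λ :=
    ((Setoid.ker_eq_ker_iff_exists_injective_comp Quotient.mk_surjective).2
      ⟨β, β.injective, rfl⟩).trans (Setoid.ker_mk_eq Λ)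
  let s := MulActionHom.funLeft (Perm (Fin n)) (X := Fin n) q
  have hs : Injective s := hq.injective_comp_right
  let E := ExtendByZero.linearMap k s
  have hmap : (Hmod k n l hn).map E = Vpart k n r Λ := by
    rw [Hmod_eq_span, Vpart_eq_span, Submodule.map_span, Set.image_image]
    simp_rw [E, ExtendByZero.linearMap_single hs]
    rw [← Set.image_image (fun j => Pi.single j (1 : k)) s]
    change Submodule.span k (_ '' ((· ∘ q) '' _)) = _
    rw [Set.image_comp_right_setOf_injective hq, hker]
  refine ⟨(Submodule.equivMapOfInjective E (extend_injective hs 0) _).trans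
    (LinearEquiv.ofEq _ _ hmap), fun i _ _ _ => Subtype.ext ?_, fun w x _ _ => Subtype.ext ?_⟩
  · exact ExtendByZero.linearMap_single hs i 1
  · exact (actEnd_extendByZero k s hs w x).symm

/-- For a set-partition `Λ` of `{1, …, r}` with `l = ℓ(Λ)` parts (`1 ≤ l ≤ n`),
`V(Λ) ≅ H_n(l)` as `k[W_n]`-modules; explicitly, given an enumeration `β` of the
blocks of `Λ`, the `k`-linear map sending each basis tensor `v_{i_1} ⊗ ⋯ ⊗ v_{i_l}`
of `H_n(l)` (with distinct factors) to the basis tensor of `V(Λ)` obtained by placing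
`v_{i_j}` in every tensor position of the `j`-th block of `Λ` is a `W_n`-equivariant
`k`-linear isomorphism onto `V(Λ)`. -/
theorem stmt_7 (k : Type) [CommRing k] (n r l : ℕ) (hl : 1 ≤ l) (hn : l ≤ n)
    (Λ : Setoid (Fin r)) (hcard : Nat.card (Quotient Λ) = l) (β : Quotient Λ ≃ Fin l) :
    ∃ e : ↥(Hmod k n l hn) ≃ₗ[k] ↥(Vpart k n r Λ),
      (∀ (i : Fin l → Fin n), Function.Injective i →
        ∀ (h1 : Pi.single i (1 : k) ∈ Hmod k n l hn)
          (h2 : Pi.single (fun α : Fin r => i (β (Quotient.mk Λ α))) (1 : k) ∈ Vpart k n r Λ),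
          e ⟨Pi.single i 1, h1⟩ = ⟨Pi.single (fun α : Fin r => i (β (Quotient.mk Λ α))) 1, h2⟩) ∧
      ∀ (w : Equiv.Perm (Fin n)) (x : ↥(Hmod k n l hn))
        (hx : permEnd k n l w ↑x ∈ Hmod k n l hn)
        (hy : permEnd k n r w ↑(e x) ∈ Vpart k n r Λ),
        e ⟨permEnd k n l w ↑x, hx⟩ = ⟨permEnd k n r w ↑(e x), hy⟩ :=
  stmt_7_general k n r l hn Λ β
end
end
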